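/- arXiv:2309.00689 — 2 statements merged into one kernel-verified Lean document; each statement's English description precedes it below -/
import Mathlib

section
/- Let $K$ be a complete discretely valued field with residue field $k$ of characteristic $\ne 2$. Then $\mathrm{AU}(K) = \{r_1 + r_2 \mid r_1, r_2 \in \mathrm{AU}(k)\}$. -/
open scoped Multiplicative ENNReal

/-- The diagonal quadratic form `⟨a i⟩` over the field `k`. -/
noncomputable def diagQF (k : Type*) [Field k] {ι : Type*} [Fintype ι] (a : ι → k) :
    QuadraticForm k (ι → k) :=
  QuadraticMap.weightedSumSquares k a

/-- A quadratic form is universal if it represents every nonzero element. -/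
def QFUniversal {k M : Type*} [Field k] [AddCommGroup M] [Module k M]
    (q : QuadraticForm k M) : Prop :=
  ∀ a : k, a ≠ 0 → ∃ x, q x = a

/-- The set of dimensions of anisotropic universal (nondegenerate) quadratic forms over `k`;
every nondegenerate form over a field of characteristic `≠ 2` is isometric to a diagonal
form with unit entries. -/
def AUSet (k : Type*) [Field k] : Set ℕ :=
  {n | ∃ a : Fin n → kˣ,
    (diagQF k fun i => (a i : k)).Anisotropic ∧ QFUniversal (diagQF k fun i => (a i : k))}

/-- The `m`-invariant: the minimal dimension of an anisotropic universal quadratic form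
(`⊤` if there is none). -/
noncomputable def mInv (k : Type*) [Field k] : ℕ∞ :=
  sInf ((↑) '' AUSet k)

/-- The `u`-invariant: the maximal dimension of an anisotropic quadratic form
(`⊤` if there is no maximum). -/
noncomputable def uInv (k : Type*) [Field k] : ℕ∞ :=
  sSup ((↑) '' {n : ℕ | ∃ a : Fin n → kˣ, (diagQF k fun i => (a i : k)).Anisotropic})

/-- `L` is a finitely generated field extension of transcendence degree one over `k`. -/
def IsOneVarFunctionField (k L : Type*) [Field k] [Field L] [Algebra k L] : Prop :=
  ∃ x : L, Transcendental k x ∧ FiniteDimensional ↥(IntermediateField.adjoin k {x}) L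

universe u

/-- The strong `u`-invariant of `k`. -/
noncomputable def uS (k : Type u) [Field k] : ℝ≥0∞ :=
  sInf {n : ℝ≥0∞ |
    (∀ (k' : Type u) [Field k'] [Algebra k k'], FiniteDimensional k k' →
      (uInv k' : ℝ≥0∞) ≤ n) ∧
    (∀ (K' : Type u) [Field K'] [Algebra k K'], IsOneVarFunctionField k K' →
      (uInv K' : ℝ≥0∞) ≤ 2 * n)}

/-- The strong `m`-invariant of `k`. -/
noncomputable def mS (k : Type u) [Field k] : ℝ≥0∞ :=
  sSup ((fun n : ℕ => (n : ℝ≥0∞)) ''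
    {n : ℕ | ∀ (k' : Type u) [Field k'] [Algebra k k'], FiniteDimensional k k' →
      (n : ℕ∞) ≤ mInv k' ∧ ((2 * n : ℕ) : ℕ∞) ≤ mInv (RatFunc k')})


/-!
Fix a uniformizer `π` of `O`. Up to squares, every element of `Kˣ` is a unit or `π` times a unit,
so every diagonal form over `K` is isometric to `⟨a⟩ ⊥ π⟨b⟩` with unit entries `a`, `b`, and this
form is anisotropic and universal exactly when the residue forms `ā` and `b̄` are:

* if `ā` and `b̄` are anisotropic, reducing modulo `π` twice shows that a solution of
  `⟨a⟩ ⊥ π⟨b⟩ = π ^ 2 v` over `O` is `π` times a solution of `⟨a⟩ ⊥ π⟨b⟩ = v`. By this descent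
  and Krull's intersection theorem the form is anisotropic over `K`, and a representation of `u`
  or of `π u` (`u` a unit) yields one of `ū` by `ā`, resp. by `b̄`;
* since `2` is invertible in the residue field, Hensel's lemma lifts zeros and representations
  of units by `ā` and `b̄` to `O`, which gives the converse implications.
-/

open IsLocalRing Polynomial QuadraticMap

section WeightedSumSquares

variable {R : Type*} [CommRing R] {ι ι' : Type*} [Fintype ι] [Fintype ι']

lemma map_weightedSumSquares {S : Type*} [CommRing S] (f : R →+* S) (w x : ι → R) :
    f (weightedSumSquares R w x) = weightedSumSquares S (f ∘ w) (f ∘ x) := by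
  simp [weightedSumSquares_apply]

lemma weightedSumSquares_sumElim (w : ι → R) (w' : ι' → R) (x : ι ⊕ ι' → R) :
    weightedSumSquares R (Sum.elim w w') x =
      weightedSumSquares R w (x ∘ Sum.inl) + weightedSumSquares R w' (x ∘ Sum.inr) := by
  simp [weightedSumSquares_apply, Fintype.sum_sum_type]

lemma weightedSumSquares_sumElim_sumElim (w : ι → R) (w' : ι' → R) (x : ι → R)
    (y : ι' → R) :
    weightedSumSquares R (Sum.elim w w') (Sum.elim x y) =
      weightedSumSquares R w x + weightedSumSquares R w' y := by
  rw [weightedSumSquares_sumElim, Sum.elim_comp_inl, Sum.elim_comp_inr]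

lemma weightedSumSquares_smul_weights (c : R) (w x : ι → R) :
    weightedSumSquares R (c • w) x = c * weightedSumSquares R w x := by
  simp [weightedSumSquares_apply, Finset.mul_sum, mul_assoc]

lemma weightedSumSquares_update [DecidableEq ι] (w x : ι → R) (i : ι) (t : R) :
    weightedSumSquares R w (Function.update x i t) =
      weightedSumSquares R w x + w i * (t ^ 2 - x i ^ 2) := by
  simp only [weightedSumSquares_apply, smul_eq_mul]
  rw [← Finset.add_sum_erase _ _ (Finset.mem_univ i),
    ← Finset.add_sum_erase _ _ (Finset.mem_univ i),
    Finset.sum_congr rfl fun j hj => by rw [Function.update_of_ne (Finset.ne_of_mem_erase hj)]]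
  simp only [Function.update_self]
  ring

lemma weightedSumSquares_single [DecidableEq ι] (w : ι → R) (i : ι) :
    weightedSumSquares R w (Pi.single i 1) = w i := by
  simp [weightedSumSquares_apply, Pi.single_apply]

lemma QuadraticMap.Anisotropic.weight_ne_zero [Nontrivial R] {w : ι → R}
    (h : (weightedSumSquares R w).Anisotropic) (i : ι) : w i ≠ 0 := by
  classical
  intro hw
  have := congrFun (h _ ((weightedSumSquares_single w i).trans hw)) i
  simp at this

lemma QuadraticMap.Anisotropic.of_sumElim_left {w : ι → R} {w' : ι' → R}
    (h : (weightedSumSquares R (Sum.elim w w')).Anisotropic) :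
    (weightedSumSquares R w).Anisotropic := fun x hx => by
  have := h (Sum.elim x 0) <| by
    rw [weightedSumSquares_sumElim_sumElim, hx, QuadraticMap.map_zero, add_zero]
  exact funext fun i => congrFun this (Sum.inl i)

lemma QuadraticMap.Anisotropic.of_sumElim_right {w : ι → R} {w' : ι' → R}
    (h : (weightedSumSquares R (Sum.elim w w')).Anisotropic) :
    (weightedSumSquares R w').Anisotropic := fun y hy => by
  have := h (Sum.elim 0 y) <| by
    rw [weightedSumSquares_sumElim_sumElim, hy, QuadraticMap.map_zero, zero_add]
  exact funext fun j => congrFun this (Sum.inr j)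

lemma QuadraticMap.Anisotropic.of_smul_weights {c : R} {w : ι → R}
    (h : (weightedSumSquares R (c • w)).Anisotropic) : (weightedSumSquares R w).Anisotropic :=
  fun x hx => h x (by rw [weightedSumSquares_smul_weights, hx, mul_zero])

def isometryEquivWeightedSumSquaresComp (e : ι' ≃ ι) (w : ι → R) :
    (weightedSumSquares R (w ∘ e)).IsometryEquiv (weightedSumSquares R w) where
  toLinearEquiv := LinearEquiv.funCongrLeft R R e.symm
  map_app' x := by
    simp only [weightedSumSquares_apply]
    exact (e.sum_comp _).symm.trans (by simp)

end WeightedSumSquares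

section Equivalent

variable {R M M' N : Type*} [CommSemiring R] [AddCommMonoid M] [Module R M] [AddCommMonoid M']
  [Module R M'] [AddCommMonoid N] [Module R N] {Q : QuadraticMap R M N} {Q' : QuadraticMap R M' N}

lemma QuadraticMap.IsometryEquiv.anisotropic (f : Q.IsometryEquiv Q') (h : Q'.Anisotropic) :
    Q.Anisotropic := fun x hx => f.map_eq_zero_iff.mp (h _ ((f.map_app x).trans hx))

lemma QuadraticMap.Equivalent.anisotropic_iff (h : Q.Equivalent Q') :
    Q.Anisotropic ↔ Q'.Anisotropic :=
  let ⟨f⟩ := h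
  ⟨f.symm.anisotropic, f.anisotropic⟩

end Equivalent

section Universal

variable {k M M' : Type*} [Field k] [AddCommGroup M] [Module k M] [AddCommGroup M'] [Module k M']
  {Q : QuadraticForm k M} {Q' : QuadraticForm k M'}

lemma QuadraticMap.IsometryEquiv.qfUniversal (f : Q.IsometryEquiv Q') (h : QFUniversal Q) :
    QFUniversal Q' := fun c hc =>
  let ⟨x, hx⟩ := h c hc
  ⟨f x, (f.map_app x).trans hx⟩

lemma QuadraticMap.Equivalent.qfUniversal_iff (h : Q.Equivalent Q') :
    QFUniversal Q ↔ QFUniversal Q' :=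
  let ⟨f⟩ := h
  ⟨f.qfUniversal, f.symm.qfUniversal⟩

end Universal

lemma card_mem_AUSet {k ι : Type*} [Field k] [Fintype ι] {w : ι → k}
    (haniso : (diagQF k w).Anisotropic) (huniv : QFUniversal (diagQF k w)) :
    Fintype.card ι ∈ AUSet k :=
  let f := isometryEquivWeightedSumSquaresComp (Fintype.equivFin ι).symm w
  ⟨fun i => Units.mk0 (w ((Fintype.equivFin ι).symm i)) (Anisotropic.weight_ne_zero haniso _),
    f.anisotropic haniso, f.symm.qfUniversal huniv⟩

section Henselian

variable {O : Type*} [CommRing O] [IsLocalRing O] [HenselianRing O (maximalIdeal O)]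
  {ι : Type*} [Fintype ι]

lemma exists_sq_eq_of_residue_eq_sq (h2 : (2 : ResidueField O) ≠ 0) {s t₀ : O}
    (ht₀ : residue O t₀ ≠ 0) (h : residue O s = residue O t₀ ^ 2) :
    ∃ t, t ^ 2 = s ∧ residue O t = residue O t₀ := by
  have hmonic : (X ^ 2 - C s : O[X]).Monic := monic_X_pow_sub_C s two_ne_zero
  have heval : (X ^ 2 - C s : O[X]).eval t₀ ∈ maximalIdeal O := by
    rw [← residue_eq_zero_iff]
    simp [h]
  have hderiv : IsUnit (residue O ((X ^ 2 - C s : O[X]).derivative.eval t₀)) := by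
    rw [isUnit_iff_ne_zero]
    have : (X ^ 2 - C s : O[X]).derivative.eval t₀ = 2 * t₀ := by simp; ring
    rw [this, map_mul, map_ofNat]
    exact mul_ne_zero h2 ht₀
  obtain ⟨t, ht, htt₀⟩ := HenselianRing.is_henselian _ hmonic t₀ heval hderiv
  refine ⟨t, by simpa [sub_eq_zero] using ht, ?_⟩
  rwa [← sub_eq_zero, ← map_sub, residue_eq_zero_iff]

lemma exists_weightedSumSquares_eq_of_residue (h2 : (2 : ResidueField O) ≠ 0) (a : ι → O)
    (c : O) {ξ : ι → ResidueField O} (hξ : diagQF _ (residue O ∘ a) ξ = residue O c)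
    {i₀ : ι} (hi₀ : residue O (a i₀) * ξ i₀ ≠ 0) :
    ∃ x : ι → O, weightedSumSquares O a x = c ∧ residue O ∘ x = ξ := by
  classical
  choose x₀ hx₀ using fun i => residue_surjective (ξ i)
  replace hx₀ : residue O ∘ x₀ = ξ := funext hx₀
  obtain ⟨ha₀, hξi₀⟩ := mul_ne_zero_iff.mp hi₀
  set u := ((residue_ne_zero_iff_isUnit _).mp ha₀).unit
  have hres : residue O (c - weightedSumSquares O a x₀) = 0 := by
    rw [map_sub, map_weightedSumSquares, hx₀, ← hξ]
    exact sub_self _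
  -- Only the `i₀`-th coordinate of a lift `x₀` of `ξ` is corrected: it has to solve
  -- `t ^ 2 = x₀ i₀ ^ 2 + (c - ∑ a x₀²) / a i₀`, of which `x₀ i₀` is a simple root mod `𝔪`.
  obtain ⟨t, ht, hres_t⟩ := exists_sq_eq_of_residue_eq_sq h2 (t₀ := x₀ i₀)
    (s := x₀ i₀ ^ 2 + ↑u⁻¹ * (c - weightedSumSquares O a x₀))
    (by rwa [← hx₀] at hξi₀) (by rw [map_add, map_mul, hres, mul_zero, add_zero, map_pow])
  refine ⟨Function.update x₀ i₀ t, ?_, funext fun i => ?_⟩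
  · rw [weightedSumSquares_update, ht]
    have : a i₀ * ↑u⁻¹ = 1 := u.mul_inv
    linear_combination (c - weightedSumSquares O a x₀) * this
  · rcases eq_or_ne i i₀ with rfl | hi
    · simp [hres_t, ← hx₀]
    · simp [hi, ← hx₀]

lemma anisotropic_residue_of_anisotropic (h2 : (2 : ResidueField O) ≠ 0) {a : ι → O}
    (ha : ∀ i, IsUnit (a i)) (h : (weightedSumSquares O a).Anisotropic) :
    (diagQF _ (residue O ∘ a)).Anisotropic := by
  intro ξ hξ
  by_contra hξ0
  obtain ⟨i₀, hi₀⟩ := Function.ne_iff.mp hξ0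
  obtain ⟨x, hx, rfl⟩ := exists_weightedSumSquares_eq_of_residue h2 a 0
    (hξ.trans (map_zero _).symm) (mul_ne_zero ((residue_ne_zero_iff_isUnit _).mpr (ha i₀)) hi₀)
  rw [h x hx] at hξ0
  exact hξ0 (funext fun _ => map_zero _)

lemma exists_weightedSumSquares_eq_of_qfUniversal_residue (h2 : (2 : ResidueField O) ≠ 0)
    {a : ι → O} (hu : QFUniversal (diagQF _ (residue O ∘ a))) {c : O} (hc : IsUnit c) :
    ∃ x, weightedSumSquares O a x = c := by
  obtain ⟨ξ, hξ⟩ := hu _ ((residue_ne_zero_iff_isUnit c).mpr hc)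
  obtain ⟨i₀, hi₀⟩ : ∃ i₀, residue O (a i₀) * ξ i₀ ≠ 0 := by
    by_contra! h
    refine (residue_ne_zero_iff_isUnit c).mpr hc (hξ.symm.trans ?_)
    simp [diagQF, weightedSumSquares_apply, ← mul_assoc, h]
  obtain ⟨x, hx, -⟩ := exists_weightedSumSquares_eq_of_residue h2 a c hξ hi₀
  exact ⟨x, hx⟩

end Henselian

section Descent

variable {O : Type*} [CommRing O] [IsDomain O] [IsDiscreteValuationRing O] {π : O}
  (hπ : Irreducible π) {ι₁ ι₂ : Type*} [Fintype ι₁] [Fintype ι₂]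
  {a : ι₁ → O} {b : ι₂ → O}
include hπ

lemma residue_add_irreducible_mul (s t : O) : residue O (s + π * t) = residue O s := by
  rw [map_add, map_mul, (residue_eq_zero_iff π).mpr ((mem_maximalIdeal π).mpr hπ.not_isUnit),
    zero_mul, add_zero]

lemma exists_eq_smul_of_weightedSumSquares_add_mul (ha : (diagQF _ (residue O ∘ a)).Anisotropic)
    {X : ι₁ → O} {t c : O} (h : weightedSumSquares O a X + π * t = π * c) :
    ∃ X₁, X = π • X₁ ∧ π * weightedSumSquares O a X₁ + t = c := by
  have hres : residue O (weightedSumSquares O a X) = 0 := by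
    rw [← residue_add_irreducible_mul hπ _ t, h, ← zero_add (π * c),
      residue_add_irreducible_mul hπ, map_zero]
  have hdvd (i : ι₁) : π ∣ X i := by
    rw [← Ideal.mem_span_singleton, ← hπ.maximalIdeal_eq, ← residue_eq_zero_iff]
    exact congrFun (ha _ (by rwa [map_weightedSumSquares] at hres)) i
  choose X₁ hX₁ using hdvd
  have hX : X = π • X₁ := funext hX₁
  refine ⟨X₁, hX, mul_left_cancel₀ hπ.ne_zero ?_⟩
  rw [← h, hX, QuadraticMap.map_smul, smul_eq_mul]
  ring

lemma exists_eq_smul_of_weightedSumSquares_sumElim_eq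
    (ha : (diagQF _ (residue O ∘ a)).Anisotropic)
    (hb : (diagQF _ (residue O ∘ b)).Anisotropic) {x : ι₁ ⊕ ι₂ → O} {v : O}
    (h : weightedSumSquares O (Sum.elim a (π • b)) x = π ^ 2 * v) :
    ∃ x₁, x = π • x₁ ∧ weightedSumSquares O (Sum.elim a (π • b)) x₁ = v := by
  rw [weightedSumSquares_sumElim, weightedSumSquares_smul_weights] at h
  obtain ⟨X₁, hX, hX₁⟩ := exists_eq_smul_of_weightedSumSquares_add_mul hπ ha
    (c := π * v) (by rw [h]; ring)
  obtain ⟨Y₁, hY, hY₁⟩ := exists_eq_smul_of_weightedSumSquares_add_mul hπ hb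
    (t := weightedSumSquares O a X₁) (c := v) (by rw [← hX₁]; ring)
  refine ⟨Sum.elim X₁ Y₁, funext fun s => ?_, ?_⟩
  · cases s with
    | inl i => exact congrFun hX i
    | inr j => exact congrFun hY j
  · rw [weightedSumSquares_sumElim, weightedSumSquares_smul_weights, Sum.elim_comp_inl,
      Sum.elim_comp_inr, ← hY₁]
    ring

lemma exists_eq_pow_smul_of_weightedSumSquares_sumElim_eq
    (ha : (diagQF _ (residue O ∘ a)).Anisotropic) (hb : (diagQF _ (residue O ∘ b)).Anisotropic)
    {x : ι₁ ⊕ ι₂ → O} (n : ℕ) {v : O}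
    (h : weightedSumSquares O (Sum.elim a (π • b)) x = π ^ (2 * n) * v) :
    ∃ x', x = π ^ n • x' ∧ weightedSumSquares O (Sum.elim a (π • b)) x' = v := by
  induction n generalizing v with
  | zero => exact ⟨x, by rw [pow_zero, one_smul], by simpa using h⟩
  | succ n ih =>
    obtain ⟨x', rfl, hx'⟩ := ih (v := π ^ 2 * v) (by rw [h]; ring)
    obtain ⟨x'', rfl, hx''⟩ := exists_eq_smul_of_weightedSumSquares_sumElim_eq hπ ha hb hx'
    exact ⟨x'', by rw [smul_smul, ← pow_succ], hx''⟩

lemma anisotropic_weightedSumSquares_sumElim (ha : (diagQF _ (residue O ∘ a)).Anisotropic)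
    (hb : (diagQF _ (residue O ∘ b)).Anisotropic) :
    (weightedSumSquares O (Sum.elim a (π • b))).Anisotropic := by
  intro x hx
  have hmem (s : ι₁ ⊕ ι₂) (n : ℕ) : x s ∈ maximalIdeal O ^ n := by
    obtain ⟨x', rfl, -⟩ := exists_eq_pow_smul_of_weightedSumSquares_sumElim_eq hπ ha hb n
      (hx.trans (mul_zero _).symm)
    rw [hπ.maximalIdeal_eq, Ideal.span_singleton_pow, Ideal.mem_span_singleton]
    exact dvd_mul_right _ _
  funext s
  have hKrull :=
    Ideal.iInf_pow_eq_bot_of_isLocalRing (maximalIdeal O) (maximalIdeal.isMaximal O).ne_top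
  simpa [← Ideal.mem_bot, ← hKrull, Ideal.mem_iInf] using hmem s

end Descent

section FractionField

variable {O : Type*} [CommRing O] {K : Type*} [Field K] [Algebra O K] {ι : Type*} [Fintype ι]

lemma diagQF_algebraMap_comp (w x : ι → O) :
    diagQF K (algebraMap O K ∘ w) (algebraMap O K ∘ x) =
      algebraMap O K (weightedSumSquares O w x) :=
  (map_weightedSumSquares _ w x).symm

variable [IsDomain O] [IsFractionRing O K]

lemma exists_smul_eq_algebraMap_comp (z : ι → K) :
    ∃ d : O, d ≠ 0 ∧ ∃ x : ι → O, algebraMap O K d • z = algebraMap O K ∘ x := by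
  obtain ⟨d, hd⟩ := IsLocalization.exist_integer_multiples_of_finite (nonZeroDivisors O) z
  choose x hx using hd
  exact ⟨d, nonZeroDivisors.coe_ne_zero d, x,
    funext fun i => by simp [hx i, Algebra.smul_def]⟩

lemma anisotropic_diagQF_algebraMap_comp_iff (w : ι → O) :
    (diagQF K (algebraMap O K ∘ w)).Anisotropic ↔ (weightedSumSquares O w).Anisotropic := by
  have hinj := IsFractionRing.injective O K
  constructor
  · intro h x hx
    have := h _ (by rw [diagQF_algebraMap_comp, hx, map_zero])
    exact funext fun i => hinj (by simpa using congrFun this i)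
  · intro h z hz
    obtain ⟨d, hd, x, hx⟩ := exists_smul_eq_algebraMap_comp (O := O) z
    have hx0 : x = 0 := h x <| hinj <| by
      rw [← diagQF_algebraMap_comp, ← hx, QuadraticMap.map_smul, hz, smul_zero, map_zero]
    rw [hx0] at hx
    exact (smul_eq_zero.mp (hx.trans (by ext; simp))).resolve_left
      ((map_ne_zero_iff _ hinj).mpr hd)

variable [IsDiscreteValuationRing O] {π : O} (hπ : Irreducible π)
include hπ

lemma exists_pow_smul_eq_algebraMap_comp (z : ι → K) :
    ∃ (n : ℕ) (x : ι → O), algebraMap O K π ^ n • z = algebraMap O K ∘ x := by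
  obtain ⟨d, hd, x, hx⟩ := exists_smul_eq_algebraMap_comp (O := O) z
  obtain ⟨n, u, rfl⟩ := IsDiscreteValuationRing.eq_unit_mul_pow_irreducible hd hπ
  refine ⟨n, fun i => ↑u⁻¹ * x i, funext fun i => ?_⟩
  have := congrFun hx i
  simp only [Pi.smul_apply, smul_eq_mul, Function.comp_apply, map_mul, map_pow] at this ⊢
  rw [← this, ← mul_assoc, ← mul_assoc, ← map_mul, Units.inv_mul, map_one, one_mul]

lemma exists_eq_algebraMap_mul_sq {x : K} (hx : x ≠ 0) :
    ∃ (u : Oˣ) (t : K), t ≠ 0 ∧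
      (x = algebraMap O K u * t ^ 2 ∨ x = algebraMap O K (π * u) * t ^ 2) := by
  obtain ⟨n, u, rfl⟩ := IsDiscreteValuationRing.exists_units_eq_smul_zpow_of_irreducible hπ hx
  have hπK : algebraMap O K π ≠ 0 :=
    (map_ne_zero_iff _ (IsFractionRing.injective O K)).mpr hπ.ne_zero
  obtain ⟨m, rfl | rfl⟩ := Int.even_or_odd' n
  · refine ⟨u, algebraMap O K π ^ m, zpow_ne_zero _ hπK, Or.inl ?_⟩
    rw [Units.smul_def, Algebra.smul_def, mul_comm 2 m, zpow_mul, zpow_two, _root_.sq]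
  · refine ⟨u, algebraMap O K π ^ m, zpow_ne_zero _ hπK, Or.inr ?_⟩
    rw [Units.smul_def, Algebra.smul_def, zpow_add_one₀ hπK, mul_comm 2 m, zpow_mul, zpow_two,
      map_mul]
    ring

end FractionField

section Springer

variable {O : Type*} [CommRing O] [IsDomain O] {K : Type*} [Field K] [Algebra O K]
  [IsFractionRing O K] {ι₁ ι₂ : Type*} [Fintype ι₁] [Fintype ι₂]
  {a : ι₁ → O} {b : ι₂ → O} {π : O}

lemma anisotropic_residue_of_anisotropic_diagQF_sumElim [IsLocalRing O]
    [HenselianRing O (maximalIdeal O)] (h2 : (2 : ResidueField O) ≠ 0)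
    (ha : ∀ i, IsUnit (a i)) (hb : ∀ j, IsUnit (b j))
    (h : (diagQF K (algebraMap O K ∘ Sum.elim a (π • b))).Anisotropic) :
    (diagQF _ (residue O ∘ a)).Anisotropic ∧ (diagQF _ (residue O ∘ b)).Anisotropic := by
  rw [anisotropic_diagQF_algebraMap_comp_iff] at h
  exact ⟨anisotropic_residue_of_anisotropic h2 ha h.of_sumElim_left,
    anisotropic_residue_of_anisotropic h2 hb h.of_sumElim_right.of_smul_weights⟩

variable [IsDiscreteValuationRing O] (hπ : Irreducible π)
include hπ

lemma anisotropic_diagQF_sumElim (ha : (diagQF _ (residue O ∘ a)).Anisotropic)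
    (hb : (diagQF _ (residue O ∘ b)).Anisotropic) :
    (diagQF K (algebraMap O K ∘ Sum.elim a (π • b))).Anisotropic :=
  (anisotropic_diagQF_algebraMap_comp_iff _).mpr (anisotropic_weightedSumSquares_sumElim hπ ha hb)

lemma qfUniversal_diagQF_sumElim [HenselianRing O (maximalIdeal O)]
    (h2 : (2 : ResidueField O) ≠ 0) (ha : QFUniversal (diagQF _ (residue O ∘ a)))
    (hb : QFUniversal (diagQF _ (residue O ∘ b))) :
    QFUniversal (diagQF K (algebraMap O K ∘ Sum.elim a (π • b))) := by
  intro v hv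
  obtain ⟨u, t, -, rfl | rfl⟩ := exists_eq_algebraMap_mul_sq hπ hv
  · obtain ⟨x, hx⟩ := exists_weightedSumSquares_eq_of_qfUniversal_residue h2 ha u.isUnit
    refine ⟨t • (algebraMap O K ∘ Sum.elim x 0), ?_⟩
    rw [QuadraticMap.map_smul, diagQF_algebraMap_comp, weightedSumSquares_sumElim_sumElim, hx,
      QuadraticMap.map_zero, add_zero, smul_eq_mul]
    ring
  · obtain ⟨y, hy⟩ := exists_weightedSumSquares_eq_of_qfUniversal_residue h2 hb u.isUnit
    refine ⟨t • (algebraMap O K ∘ Sum.elim 0 y), ?_⟩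
    rw [QuadraticMap.map_smul, diagQF_algebraMap_comp, weightedSumSquares_sumElim_sumElim,
      weightedSumSquares_smul_weights, hy, QuadraticMap.map_zero, zero_add, smul_eq_mul]
    ring

lemma exists_weightedSumSquares_sumElim_eq_of_qfUniversal
    (ha : (diagQF _ (residue O ∘ a)).Anisotropic) (hb : (diagQF _ (residue O ∘ b)).Anisotropic)
    (h : QFUniversal (diagQF K (algebraMap O K ∘ Sum.elim a (π • b)))) {c : O} (hc : c ≠ 0) :
    ∃ x, weightedSumSquares O (Sum.elim a (π • b)) x = c := by
  have hinj := IsFractionRing.injective O K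
  obtain ⟨z, hz⟩ := h _ ((map_ne_zero_iff _ hinj).mpr hc)
  obtain ⟨n, x, hx⟩ := exists_pow_smul_eq_algebraMap_comp hπ z
  have hxc : weightedSumSquares O (Sum.elim a (π • b)) x = π ^ (2 * n) * c := hinj <| by
    rw [← diagQF_algebraMap_comp, ← hx, QuadraticMap.map_smul, hz, smul_eq_mul, map_mul,
      map_pow, pow_mul']
    ring
  obtain ⟨x', -, hx'⟩ := exists_eq_pow_smul_of_weightedSumSquares_sumElim_eq hπ ha hb n hxc
  exact ⟨x', hx'⟩

lemma qfUniversal_residue_of_qfUniversal_diagQF_sumElim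
    (ha : (diagQF _ (residue O ∘ a)).Anisotropic) (hb : (diagQF _ (residue O ∘ b)).Anisotropic)
    (h : QFUniversal (diagQF K (algebraMap O K ∘ Sum.elim a (π • b)))) :
    QFUniversal (diagQF _ (residue O ∘ a)) ∧ QFUniversal (diagQF _ (residue O ∘ b)) := by
  constructor
  · intro v hv
    obtain ⟨c, rfl⟩ := residue_surjective v
    obtain ⟨x, hx⟩ := exists_weightedSumSquares_sumElim_eq_of_qfUniversal hπ ha hb h
      (c := c) (by rintro rfl; exact hv (map_zero _))
    rw [weightedSumSquares_sumElim, weightedSumSquares_smul_weights] at hx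
    refine ⟨residue O ∘ x ∘ Sum.inl, ?_⟩
    rw [← hx, residue_add_irreducible_mul hπ, map_weightedSumSquares]
    rfl
  · intro v hv
    obtain ⟨c, rfl⟩ := residue_surjective v
    obtain ⟨x, hx⟩ := exists_weightedSumSquares_sumElim_eq_of_qfUniversal hπ ha hb h
      (c := π * c) (mul_ne_zero hπ.ne_zero (by rintro rfl; exact hv (map_zero _)))
    rw [weightedSumSquares_sumElim, weightedSumSquares_smul_weights] at hx
    -- the `a`-part of `x` is divisible by `π`, so the `b`-part represents `c` modulo `π`
    obtain ⟨X₁, -, hX₁⟩ := exists_eq_smul_of_weightedSumSquares_add_mul hπ ha hx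
    refine ⟨residue O ∘ x ∘ Sum.inr, ?_⟩
    rw [← hX₁, add_comm, residue_add_irreducible_mul hπ, map_weightedSumSquares]
    rfl

open Classical in
lemma exists_equivalent_diagQF_sumElim {ι : Type*} [Fintype ι] {c : ι → K}
    (hc : ∀ i, c i ≠ 0) :
    ∃ (p : ι → Prop) (u : ι → Oˣ), (diagQF K c).Equivalent
      (diagQF K (algebraMap O K ∘ Sum.elim (fun i : {i // p i} => (u i : O))
        (π • fun i : {i // ¬p i} => (u i : O)))) := by
  choose u t ht hct using fun i => exists_eq_algebraMap_mul_sq (K := K) hπ (hc i)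
  let p i := c i = algebraMap O K (u i) * t i ^ 2
  let w i := if p i then algebraMap O K (u i) else algebraMap O K (π * u i)
  have hw (i : ι) : w i * (Units.mk0 (t i) (ht i) : K) ^ 2 = c i := by
    by_cases hp : p i
    · simpa [w, hp] using hp.symm
    · simp [w, hp, (hct i).resolve_left hp]
  refine ⟨p, u, ⟨(QuadraticForm.isometryEquivWeightedSumSquaresWeightedSumSquares _ hw).trans
    ((isometryEquivWeightedSumSquaresComp (Equiv.sumCompl p) w).symm.trans
      (QuadraticForm.weightedSumSquaresCongr (funext fun s => ?_)))⟩⟩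
  cases s with
  | inl i => simp [w, i.2]
  | inr i => simp [w, i.2]

end Springer

/-- If `K` is a complete discretely valued field (fraction field of a complete
discrete valuation ring `O`) with residue field `k` of characteristic `≠ 2`, then
`AU(K) = {r₁ + r₂ | r₁, r₂ ∈ AU(k)}`. -/
theorem stmt1 (O K : Type*) [CommRing O] [IsDomain O] [IsDiscreteValuationRing O]
    [IsAdicComplete (IsLocalRing.maximalIdeal O) O]
    [Field K] [Algebra O K] [IsFractionRing O K]
    (hchar : ringChar (IsLocalRing.ResidueField O) ≠ 2) :
    AUSet K = {r | ∃ r₁ ∈ AUSet (IsLocalRing.ResidueField O),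
      ∃ r₂ ∈ AUSet (IsLocalRing.ResidueField O), r = r₁ + r₂} := by
  classical
  have h2 : (2 : ResidueField O) ≠ 0 := Ring.two_ne_zero hchar
  obtain ⟨π, hπ⟩ := IsDiscreteValuationRing.exists_irreducible O
  ext n
  constructor
  · rintro ⟨c, hc_aniso, hc_univ⟩
    obtain ⟨p, u, hc⟩ := exists_equivalent_diagQF_sumElim hπ fun i => (c i).ne_zero
    obtain ⟨ha, hb⟩ := anisotropic_residue_of_anisotropic_diagQF_sumElim h2
      (fun i : {i // p i} => (u i).isUnit)
      (fun j : {j // ¬p j} => (u j).isUnit) (hc.anisotropic_iff.mp hc_aniso)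
    obtain ⟨hua, hub⟩ :=
      qfUniversal_residue_of_qfUniversal_diagQF_sumElim hπ ha hb (hc.qfUniversal_iff.mp hc_univ)
    refine ⟨_, card_mem_AUSet ha hua, _, card_mem_AUSet hb hub, ?_⟩
    rw [← Fintype.card_sum, Fintype.card_congr (Equiv.sumCompl p), Fintype.card_fin]
  · rintro ⟨r₁, ⟨a, ha, hua⟩, r₂, ⟨b, hb, hub⟩, rfl⟩
    choose a' ha' using fun i => residue_surjective (a i : ResidueField O)
    choose b' hb' using fun j => residue_surjective (b j : ResidueField O)
    rw [← funext ha'] at ha hua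
    rw [← funext hb'] at hb hub
    simpa using card_mem_AUSet (anisotropic_diagQF_sumElim (K := K) hπ ha hb)
      (qfUniversal_diagQF_sumElim hπ h2 hua hub)
end

section
/- Let $k$ be a field of characteristic $\ne 2$ with $u_s(k) < \infty$, and let $n \geq 0$ be the largest integer such that $2^n \leq u_s(k)$. Then $m_s(k) \leq 2^n \leq u_s(k)$. -/
open scoped Multiplicative ENNReal

universe u

/-!
A Pfister form `φ = ⟨1, a₀⟩ ⊗ ⋯ ⊗ ⟨1, aⱼ₋₁⟩` is round: every nonzero value `d` of `φ` is a
similarity factor, `φ ≅ d φ`. This goes by induction through `φ = ψ ⊥ a ψ`: writing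
`d = s + a t` with `s, t` values of the round form `ψ`, the isometry `⟨s, a t⟩ ≅ ⟨d, d s a t⟩`
gives `ψ ⊥ a ψ ≅ s ψ ⊥ a t ψ ≅ d ψ ⊥ d a (s t) ψ ≅ d (ψ ⊥ a ψ)`.

An anisotropic `2ʲ`-dimensional Pfister form shows `2ʲ ≤ u(k) ≤ u_s(k)`, so `j ≤ n`. Take `j`
maximal and `φ` such a form. For `e ≠ 0` the form `φ ⊥ (-e) φ` is an isotropic Pfister form, so
`φ(x) = e φ(y)` with `φ(y) ≠ 0`, and roundness turns this into `φ(z) = e`. Hence `φ` is anisotropic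
and universal, and `m_s(k) ≤ m(k) ≤ 2ʲ ≤ 2ⁿ`.
-/

namespace QuadraticMap

variable {k V V₁ V₂ : Type*} [Field k] [AddCommGroup V] [Module k V]
  [AddCommGroup V₁] [Module k V₁] [AddCommGroup V₂] [Module k V₂]

theorem Equivalent.smul {Q₁ : QuadraticForm k V₁} {Q₂ : QuadraticForm k V₂}
    (h : Q₁.Equivalent Q₂) (c : k) : (c • Q₁).Equivalent (c • Q₂) :=
  let ⟨f⟩ := h
  ⟨{ f.toLinearEquiv with map_app' := fun v => by simp [f.map_app] }⟩

theorem Equivalent.anisotropic_iff_s9 {Q₁ : QuadraticForm k V₁} {Q₂ : QuadraticForm k V₂}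
    (h : Q₁.Equivalent Q₂) : Q₁.Anisotropic ↔ Q₂.Anisotropic := by
  obtain ⟨f⟩ := h
  refine ⟨fun h₁ v hv => ?_, fun h₂ v hv => ?_⟩
  · simpa using congrArg f (h₁ (f.symm v) (by rwa [← f.map_app, f.apply_symm_apply]))
  · simpa using congrArg f.symm (h₂ (f v) (by rwa [f.map_app]))

theorem equivalent_sq_smul (Q : QuadraticForm k V) {c : k} (hc : c ≠ 0) :
    Q.Equivalent ((c ^ 2) • Q) :=
  ⟨{ LinearEquiv.smulOfNeZero k V c⁻¹ (inv_ne_zero hc) with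
    map_app' := fun v => by
      show c ^ 2 * Q (c⁻¹ • v) = Q v
      rw [QuadraticMap.map_smul, smul_eq_mul]
      field_simp }⟩

theorem Equivalent.smul_mul {Q : QuadraticForm k V} {s t : k} (hs : Q.Equivalent (s • Q))
    (ht : Q.Equivalent (t • Q)) : Q.Equivalent ((s * t) • Q) := by
  simpa [mul_smul, mul_comm s t] using ht.trans (hs.smul t)

theorem prod_smul (Q₁ : QuadraticForm k V₁) (Q₂ : QuadraticForm k V₂) (c : k) :
    (c • Q₁).prod (c • Q₂) = c • Q₁.prod Q₂ := by
  ext v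
  simp [mul_add]

theorem map_add_smul (Q : QuadraticForm k V) (u v : V) (c : k) :
    Q (u + c • v) = Q u + c ^ 2 * Q v + c * polar Q u v := by
  rw [QuadraticMap.map_add (⇑Q), QuadraticMap.map_smul, polar_smul_right, smul_eq_mul,
    smul_eq_mul, pow_two]

/-- Witnessed by `(u, v) ↦ (u + y v, u - x v)`. -/
theorem equivalent_prod_smul_add (Q : QuadraticForm k V) {x y : k} (hxy : x + y ≠ 0) :
    ((x • Q).prod (y • Q)).Equivalent (((x + y) • Q).prod (((x + y) * x * y) • Q)) := by
  let toFun : V × V →ₗ[k] V × V :=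
    (LinearMap.fst k V V + y • LinearMap.snd k V V).prod
      (LinearMap.fst k V V + (-x) • LinearMap.snd k V V)
  let invFun : V × V →ₗ[k] V × V :=
    (x + y)⁻¹ • ((x • LinearMap.fst k V V + y • LinearMap.snd k V V).prod
      (LinearMap.fst k V V - LinearMap.snd k V V))
  let e : (V × V) ≃ₗ[k] V × V := LinearEquiv.ofLinearMap (f := toFun) (g := invFun)
    (by ext <;> simp [toFun, invFun] <;> match_scalars <;> field_simp <;> ring)
    (by ext <;> simp [toFun, invFun] <;> match_scalars <;> field_simp <;> ring)
  refine Equivalent.symm ⟨{ e with map_app' := fun w => ?_ }⟩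
  simp only [prod_apply, smul_apply, smul_eq_mul]
  show x * Q (w.1 + y • w.2) + y * Q (w.1 + (-x) • w.2) = _
  rw [map_add_smul, map_add_smul]
  ring

def IsRound (Q : QuadraticForm k V) : Prop :=
  ∀ v, Q v ≠ 0 → Q.Equivalent (Q v • Q)

theorem IsRound.of_equivalent {Q₁ : QuadraticForm k V₁} {Q₂ : QuadraticForm k V₂}
    (hQ₁ : Q₁.IsRound) (h : Q₁.Equivalent Q₂) : Q₂.IsRound := by
  intro v hv
  obtain ⟨f⟩ := h
  have hv₁ : Q₁ (f.symm v) = Q₂ v := f.symm.map_app v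
  have h₁ := hQ₁ (f.symm v) (by rwa [hv₁])
  rw [hv₁] at h₁
  exact (Equivalent.symm ⟨f⟩).trans (h₁.trans (Equivalent.smul ⟨f⟩ _))

theorem IsRound.prod_smul {Q : QuadraticForm k V} (hQ : Q.IsRound) {a : k} (ha : a ≠ 0) :
    (Q.prod (a • Q)).IsRound := by
  rintro ⟨w₁, w₂⟩ hd
  simp only [prod_apply, smul_apply, smul_eq_mul] at hd ⊢
  rw [← QuadraticMap.prod_smul, smul_smul]
  rcases eq_or_ne (Q w₂) 0 with ht | ht
  · rw [ht, mul_zero, add_zero] at hd ⊢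
    simpa [smul_smul, mul_comm] using (hQ w₁ hd).prod ((hQ w₁ hd).smul a)
  rcases eq_or_ne (Q w₁) 0 with hs | hs
  · rw [hs, zero_add]
    have h₁ : (a • Q).Equivalent ((a * Q w₂) • Q) := by
      simpa only [smul_smul] using (hQ w₂ ht).smul a
    have h₂ : Q.Equivalent ((a * Q w₂ * a) • Q) := by
      have := (hQ w₂ ht).trans ((equivalent_sq_smul Q ha).smul (Q w₂))
      rwa [smul_smul, show Q w₂ * a ^ 2 = a * Q w₂ * a by ring] at this
    exact Equivalent.trans ⟨IsometryEquiv.prodComm Q (a • Q)⟩ (h₁.prod h₂)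
  have h₁ : (Q.prod (a • Q)).Equivalent ((Q w₁ • Q).prod ((a * Q w₂) • Q)) :=
    (hQ w₁ hs).prod (by simpa only [smul_smul] using (hQ w₂ ht).smul a)
  have h₃ : (((Q w₁ + a * Q w₂) * Q w₁ * (a * Q w₂)) • Q).Equivalent
      (((Q w₁ + a * Q w₂) * a) • Q) := by
    have := ((hQ w₁ hs).smul_mul (hQ w₂ ht)).smul ((Q w₁ + a * Q w₂) * a)
    rw [smul_smul, show (Q w₁ + a * Q w₂) * a * (Q w₁ * Q w₂)
      = (Q w₁ + a * Q w₂) * Q w₁ * (a * Q w₂) by ring] at this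
    exact this.symm
  exact h₁.trans ((equivalent_prod_smul_add Q hd).trans ((Equivalent.refl _).prod h₃))

theorem IsRound.exists_eq_of_not_anisotropic_prod {Q : QuadraticForm k V} (hQ : Q.IsRound)
    (hQa : Q.Anisotropic) {e : k} (h : ¬(Q.prod ((-e) • Q)).Anisotropic) : ∃ v, Q v = e := by
  obtain ⟨⟨x, y⟩, hxy, h₀⟩ := (not_anisotropic_iff_exists _).mp h
  simp only [prod_apply, smul_apply, smul_eq_mul] at h₀
  have hy : Q y ≠ 0 := by
    intro hy
    rw [hy, mul_zero, add_zero] at h₀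
    exact hxy (Prod.ext (hQa x h₀) (hQa y hy))
  obtain ⟨f⟩ := hQ y hy
  have hfx : Q y * Q (f x) = Q x := f.map_app x
  exact ⟨f x, mul_left_cancel₀ hy (by linear_combination hfx + h₀)⟩

end QuadraticMap

section Pfister

open QuadraticMap

variable {k : Type*} [Field k]

theorem diagQF_smul {ι : Type*} [Fintype ι] (r : k) (c : ι → k) :
    diagQF k (r • c) = r • diagQF k c := by
  ext v
  simp [diagQF, weightedSumSquares_apply, Finset.mul_sum, mul_assoc]

theorem diagQF_comp_equivalent {ι ι' : Type*} [Fintype ι] [Fintype ι'] (c : ι' → k)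
    (e : ι ≃ ι') : (diagQF k (c ∘ e)).Equivalent (diagQF k c) :=
  Equivalent.symm ⟨{ LinearEquiv.funCongrLeft k k e with
    map_app' := fun v => by
      simpa [diagQF, weightedSumSquares_apply] using e.sum_comp fun i => c i * (v i * v i) }⟩

theorem diagQF_sumElim_equivalent {ι ι' : Type*} [Fintype ι] [Fintype ι'] (c : ι → k)
    (c' : ι' → k) :
    (diagQF k (Sum.elim c c')).Equivalent ((diagQF k c).prod (diagQF k c')) :=
  ⟨{ LinearEquiv.sumArrowLequivProdArrow ι ι' k k with
    map_app' := fun v => by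
      simp [diagQF, weightedSumSquares_apply, Fintype.sum_sum_type,
        LinearEquiv.sumArrowLequivProdArrow] }⟩

/-- The coefficients of the Pfister form `⟨1, a₀⟩ ⊗ ⋯ ⊗ ⟨1, aⱼ₋₁⟩` (note the sign convention),
ordered as those of `ψ ⊥ a₀ ψ` with `ψ` the Pfister form of `a₁, …, aⱼ₋₁`. -/
def pfisterCoeff : {j : ℕ} → (Fin j → kˣ) → Fin (2 ^ j) → kˣ
  | 0, _ => 1
  | j + 1, a => fun i =>
    Sum.elim (pfisterCoeff (Fin.tail a)) (a 0 • pfisterCoeff (Fin.tail a))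
      (finSumFinEquiv.symm (finCongr (Nat.two_pow_succ j) i))

noncomputable abbrev pfister {j : ℕ} (a : Fin j → kˣ) : QuadraticForm k (Fin (2 ^ j) → k) :=
  diagQF k fun i => (pfisterCoeff a i : k)

theorem pfister_zero_apply (a : Fin 0 → kˣ) (v : Fin (2 ^ 0) → k) : pfister a v = v 0 ^ 2 := by
  simp [diagQF, weightedSumSquares_apply, pfisterCoeff, pow_two]

theorem pfister_zero_anisotropic (a : Fin 0 → kˣ) : (pfister a).Anisotropic := fun v hv => by
  rw [pfister_zero_apply, sq_eq_zero_iff] at hv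
  exact funext fun i => by rwa [Subsingleton.elim (α := Fin 1) i 0]

theorem pfister_succ_equivalent {j : ℕ} (a : Fin (j + 1) → kˣ) :
    (pfister a).Equivalent
      ((pfister (Fin.tail a)).prod ((a 0 : k) • pfister (Fin.tail a))) := by
  let c : Fin (2 ^ j) → k := fun i => (pfisterCoeff (Fin.tail a) i : k)
  have hcoeff : (fun i => (pfisterCoeff a i : k)) = Sum.elim c ((a 0 : k) • c) ∘
      (finCongr (Nat.two_pow_succ j)).trans finSumFinEquiv.symm := by
    funext i
    simp only [pfisterCoeff, Function.comp_apply, Equiv.trans_apply]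
    cases finSumFinEquiv.symm (finCongr (Nat.two_pow_succ j) i) <;> simp [c]
  rw [pfister, hcoeff, ← diagQF_smul]
  exact (diagQF_comp_equivalent _ _).trans (diagQF_sumElim_equivalent _ _)

theorem isRound_pfister : ∀ {j : ℕ} (a : Fin j → kˣ), (pfister a).IsRound
  | 0, a => fun v hv => by
    rw [pfister_zero_apply] at hv ⊢
    exact equivalent_sq_smul _ (pow_ne_zero_iff two_ne_zero |>.mp hv)
  | _ + 1, a =>
    ((isRound_pfister (Fin.tail a)).prod_smul (a 0).ne_zero).of_equivalent
      (pfister_succ_equivalent a).symm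

theorem pfister_universal {j : ℕ} {a : Fin j → kˣ} (ha : (pfister a).Anisotropic)
    (hmax : ∀ b : Fin (j + 1) → kˣ, ¬(pfister b).Anisotropic) : QFUniversal (pfister a) := by
  intro e he
  have h := (pfister_succ_equivalent
    (Fin.cons (Units.mk0 (-e) (neg_ne_zero.2 he)) a)).anisotropic_iff_s9.not.mp (hmax _)
  simp only [Fin.tail_cons, Fin.cons_zero, Units.val_mk0] at h
  exact (isRound_pfister a).exists_eq_of_not_anisotropic_prod ha h

theorem exists_anisotropic_pfister_maximal {N : ℕ}
    (hN : ∀ j (a : Fin j → kˣ), (pfister a).Anisotropic → j ≤ N) :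
    ∃ j, ∃ a : Fin j → kˣ, (pfister a).Anisotropic ∧
      ∀ b : Fin (j + 1) → kˣ, ¬(pfister b).Anisotropic := by
  classical
  let P j := ∃ a : Fin j → kˣ, (pfister a).Anisotropic
  obtain ⟨a, ha⟩ : P (Nat.findGreatest P N) :=
    Nat.findGreatest_spec (Nat.zero_le N) ⟨Fin.elim0, pfister_zero_anisotropic _⟩
  exact ⟨_, a, ha, fun b hb =>
    Nat.findGreatest_is_greatest (Nat.lt_succ_self _) (hN _ b hb) ⟨b, hb⟩⟩

end Pfister

section Invariants

variable {k : Type*} [Field k]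

theorem natCast_le_uInv {m : ℕ} (a : Fin m → kˣ)
    (ha : (diagQF k fun i => (a i : k)).Anisotropic) : (m : ℕ∞) ≤ uInv k :=
  le_sSup ⟨m, ⟨a, ha⟩, rfl⟩

theorem mInv_le_natCast {m : ℕ} (hm : m ∈ AUSet k) : mInv k ≤ m :=
  sInf_le ⟨m, hm, rfl⟩

theorem uInv_le_uS (k : Type u) [Field k] : (uInv k : ℝ≥0∞) ≤ uS k :=
  le_sInf fun _ hr => hr.1 k inferInstance

theorem mS_le_mInv (k : Type u) [Field k] : mS k ≤ mInv k := by
  refine sSup_le ?_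
  rintro _ ⟨m, hm, rfl⟩
  exact ENat.toENNReal_le.mpr (hm k inferInstance).1

end Invariants

theorem stmt9_general (k : Type u) [Field k] (n : ℕ)
    (h1 : (2 : ℝ≥0∞) ^ n ≤ uS k)
    (h2 : ∀ m : ℕ, (2 : ℝ≥0∞) ^ m ≤ uS k → m ≤ n) :
    mS k ≤ 2 ^ n ∧ (2 : ℝ≥0∞) ^ n ≤ uS k := by
  refine ⟨?_, h1⟩
  have hbound : ∀ j (a : Fin j → kˣ), (pfister a).Anisotropic → j ≤ n := fun j a ha =>
    h2 j <| calc
      (2 : ℝ≥0∞) ^ j = ((2 ^ j : ℕ) : ℕ∞) := by simp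
      _ ≤ uInv k := ENat.toENNReal_le.mpr (natCast_le_uInv _ ha)
      _ ≤ uS k := uInv_le_uS k
  obtain ⟨j, a, ha, hmax⟩ := exists_anisotropic_pfister_maximal hbound
  calc mS k ≤ mInv k := mS_le_mInv k
    _ ≤ ((2 ^ j : ℕ) : ℕ∞) :=
      ENat.toENNReal_le.mpr (mInv_le_natCast ⟨_, ha, pfister_universal ha hmax⟩)
    _ ≤ 2 ^ n := by
      simpa using pow_le_pow_right₀ one_le_two (hbound j a ha)

/-- Let `k` be a field of characteristic `≠ 2` with `u_s(k) < ∞`, and let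
`n ≥ 0` be the largest integer with `2 ^ n ≤ u_s(k)`. Then `m_s(k) ≤ 2 ^ n ≤ u_s(k)`. -/
theorem stmt9 (k : Type u) [Field k] (hchar : ringChar k ≠ 2)
    (hfin : uS k ≠ ⊤) (n : ℕ)
    (h1 : (2 : ℝ≥0∞) ^ n ≤ uS k)
    (h2 : ∀ m : ℕ, (2 : ℝ≥0∞) ^ m ≤ uS k → m ≤ n) :
    mS k ≤ 2 ^ n ∧ (2 : ℝ≥0∞) ^ n ≤ uS k :=
  stmt9_general k n h1 h2
end
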